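/- The error terms in the normal approximation to the Poisson cumulative distribution function satisfy: (1/√s) Σ_{i=0}^{s−1} (Π_i(s) − Φ((i − s)/√s)) → 0 as the integer s → ∞. -/

import Mathlib

open Filter Real

/-- Poisson(κ) probability mass function. -/
noncomputable def poissonPMF (κ : ℝ) (i : ℕ) : ℝ :=
  Real.exp (-κ) * κ ^ i / (Nat.factorial i)

/-- Poisson(κ) cumulative distribution function. -/
noncomputable def poissonCDF (κ : ℝ) (i : ℕ) : ℝ :=
  ∑ j ∈ Finset.range (i + 1), poissonPMF κ j

/-- Standard normal cumulative distribution function. -/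
noncomputable def normalCDF (x : ℝ) : ℝ :=
  (Real.sqrt (2 * Real.pi))⁻¹ * ∫ v in Set.Iic x, Real.exp (-v ^ 2 / 2)

/-!
Since `(n + 1) ϖ_{n+1}(κ) = κ ϖ_n(κ)`, summation by parts gives `∑_{i<s} Π_i(s) = s ϖ_s(s)`,
so the Poisson half of the average is `√s ϖ_s(s) = (√2 · stirlingSeq s)⁻¹ → 1/√(2π)` by
Stirling. The normal half is a Riemann sum with mesh `1/√s` of the increasing function `Φ` on
`[-√s, 0]`, squeezed between integrals of `Φ` over intervals growing to `(-∞, 0]`. With the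
primitive `x Φ(x) + φ(x)` of `Φ`, which vanishes at `-∞` by Mills' inequality `-x Φ(x) ≤ φ(x)`,
these integrals tend to `φ(0) = 1/√(2π)` as well.
-/

open MeasureTheory Set Topology

lemma poissonPMF_succ (κ : ℝ) (n : ℕ) :
    (n + 1) * poissonPMF κ (n + 1) = κ * poissonPMF κ n := by
  simp only [poissonPMF, Nat.factorial_succ, Nat.cast_mul, Nat.cast_succ, pow_succ]
  field_simp

lemma poissonCDF_succ (κ : ℝ) (n : ℕ) :
    poissonCDF κ (n + 1) = poissonCDF κ n + poissonPMF κ (n + 1) :=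
  Finset.sum_range_succ _ _

lemma sum_range_succ_poissonCDF (κ : ℝ) (n : ℕ) :
    ∑ i ∈ Finset.range (n + 1), poissonCDF κ i
      = (n + 1 - κ) * poissonCDF κ n + κ * poissonPMF κ n := by
  induction n with
  | zero => simp [poissonCDF]; ring
  | succ n ih =>
    rw [Finset.sum_range_succ, ih, poissonCDF_succ]
    push_cast
    linear_combination -poissonPMF_succ κ n

lemma sum_range_poissonCDF_self (n : ℕ) :
    ∑ i ∈ Finset.range n, poissonCDF n i = n * poissonPMF n n := by
  cases n with
  | zero => simp
  | succ n =>
    rw [sum_range_succ_poissonCDF]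
    push_cast
    linear_combination -poissonPMF_succ (n + 1 : ℝ) n

lemma sqrt_mul_poissonPMF_self {n : ℕ} (hn : n ≠ 0) :
    √n * poissonPMF n n = (√2 * Stirling.stirlingSeq n)⁻¹ := by
  have hn' : (0 : ℝ) < n := by positivity
  rw [Stirling.stirlingSeq, poissonPMF, Real.sqrt_mul zero_le_two, div_pow, ← Real.exp_nat_mul,
    mul_one, Real.exp_neg]
  field_simp

lemma tendsto_poissonCDF_average :
    Tendsto (fun s : ℕ => (1 / √s) * ∑ i ∈ Finset.range s, poissonCDF s i)
      atTop (𝓝 (√(2 * π))⁻¹) := by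
  have hstirling : Tendsto (fun n : ℕ => (√2 * Stirling.stirlingSeq n)⁻¹)
      atTop (𝓝 (√(2 * π))⁻¹) := by
    rw [Real.sqrt_mul zero_le_two]
    exact ((Stirling.tendsto_stirlingSeq_sqrt_pi.const_mul _).inv₀ (by positivity))
  refine hstirling.congr' ?_
  filter_upwards [eventually_ne_atTop 0] with s hs
  rw [sum_range_poissonCDF_self, ← mul_assoc, one_div_mul_eq_div, Real.div_sqrt,
    sqrt_mul_poissonPMF_self hs]

lemma sub_div_sqrt (x y : ℝ) : (x - y) / √y = -√y + x * (1 / √y) := by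
  rw [sub_div, Real.div_sqrt]; ring

lemma mul_one_div_sqrt (x : ℝ) : x * (1 / √x) = √x := by
  rw [mul_one_div, Real.div_sqrt]

section RiemannSum

variable {f : ℝ → ℝ} {h : ℝ}

lemma integral_zero_comp_add_mul (hh : 0 < h) (a b : ℝ) :
    ∫ y in (0 : ℝ)..b, f (a + y * h) = h⁻¹ * ∫ x in a..a + b * h, f x := by
  simp_rw [mul_comm _ h]
  rw [intervalIntegral.integral_comp_add_mul _ hh.ne', smul_eq_mul, mul_zero, add_zero]

lemma Monotone.mul_sum_le_integral (hf : Monotone f) (hh : 0 < h) (a : ℝ) (n : ℕ) :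
    h * ∑ i ∈ Finset.range n, f (a + i * h) ≤ ∫ x in a..a + n * h, f x := by
  have hg : Monotone fun y => f (a + y * h) :=
    hf.comp ((monotone_id.mul_const hh.le).const_add a)
  have := (hg.monotoneOn (Icc (0 : ℝ) (0 + n))).sum_le_integral
  simp only [zero_add] at this
  rw [integral_zero_comp_add_mul hh] at this
  rwa [le_inv_mul_iff₀ hh] at this

lemma Monotone.integral_le_mul_sum (hf : Monotone f) (hh : 0 < h) (a : ℝ) (n : ℕ) :
    ∫ x in a..a + n * h, f x ≤ h * ∑ i ∈ Finset.range n, f (a + (i + 1) * h) := by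
  have hg : Monotone fun y => f (a + y * h) :=
    hf.comp ((monotone_id.mul_const hh.le).const_add a)
  have := (hg.monotoneOn (Icc (0 : ℝ) (0 + n))).integral_le_sum
  simp only [zero_add, Nat.cast_succ] at this
  rw [integral_zero_comp_add_mul hh] at this
  rwa [inv_mul_le_iff₀ hh] at this

lemma Monotone.le_riemannSum_of_hasDerivAt {F : ℝ → ℝ} (hf : Monotone f)
    (hF : ∀ x, HasDerivAt F (f x) x) {s : ℕ} (hs : 0 < s) :
    F (-(1 / √s)) - F (-√s + -(1 / √s))
      ≤ (1 / √s) * ∑ i ∈ Finset.range s, f ((i - s) / √s) := by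
  have hmesh : 0 < 1 / √(s : ℝ) := one_div_pos.2 (Real.sqrt_pos.2 (Nat.cast_pos.2 hs))
  have hend : -√s + -(1 / √s) + s * (1 / √s) = -(1 / √s) := by
    linear_combination mul_one_div_sqrt (s : ℝ)
  have := hf.integral_le_mul_sum hmesh (-√s + -(1 / √s)) s
  rw [intervalIntegral.integral_eq_sub_of_hasDerivAt (fun x _ => hF x) hf.intervalIntegrable,
    hend] at this
  refine this.trans_eq (congrArg _ (Finset.sum_congr rfl fun i _ => ?_))
  rw [sub_div_sqrt]
  congr 1
  ring

lemma Monotone.riemannSum_le_of_hasDerivAt {F : ℝ → ℝ} (hf : Monotone f)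
    (hF : ∀ x, HasDerivAt F (f x) x) {s : ℕ} (hs : 0 < s) :
    (1 / √s) * ∑ i ∈ Finset.range s, f ((i - s) / √s) ≤ F 0 - F (-√s) := by
  have hmesh : 0 < 1 / √(s : ℝ) := one_div_pos.2 (Real.sqrt_pos.2 (Nat.cast_pos.2 hs))
  have := hf.mul_sum_le_integral hmesh (-√s) s
  rw [intervalIntegral.integral_eq_sub_of_hasDerivAt (fun x _ => hF x) hf.intervalIntegrable,
    mul_one_div_sqrt, neg_add_cancel] at this
  simpa only [sub_div_sqrt] using this

lemma Monotone.tendsto_riemannSum_of_hasDerivAt {F : ℝ → ℝ} {L : ℝ} (hf : Monotone f)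
    (hF : ∀ x, HasDerivAt F (f x) x) (hFL : Tendsto F atBot (𝓝 L)) :
    Tendsto (fun s : ℕ => (1 / √s) * ∑ i ∈ Finset.range s, f ((i - s) / √s))
      atTop (𝓝 (F 0 - L)) := by
  have hsqrt : Tendsto (fun s : ℕ => √(s : ℝ)) atTop atTop :=
    Real.tendsto_sqrt_atTop.comp tendsto_natCast_atTop_atTop
  have hmesh : Tendsto (fun s : ℕ => -(1 / √(s : ℝ))) atTop (𝓝 0) := by
    simpa only [neg_zero] using (tendsto_const_nhds.div_atTop hsqrt).neg
  have hlower : Tendsto (fun s : ℕ => F (-(1 / √s)) - F (-√s + -(1 / √s)))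
      atTop (𝓝 (F 0 - L)) :=
    ((hF 0).continuousAt.tendsto.comp hmesh).sub
      (hFL.comp ((tendsto_neg_atTop_atBot.comp hsqrt).atBot_add hmesh))
  have hupper : Tendsto (fun s : ℕ => F 0 - F (-√s)) atTop (𝓝 (F 0 - L)) :=
    tendsto_const_nhds.sub (hFL.comp (tendsto_neg_atTop_atBot.comp hsqrt))
  refine tendsto_of_tendsto_of_tendsto_of_le_of_le' hlower hupper ?_ ?_
  · filter_upwards [eventually_gt_atTop 0] with s hs
    exact hf.le_riemannSum_of_hasDerivAt hF hs
  · filter_upwards [eventually_gt_atTop 0] with s hs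
    exact hf.riemannSum_le_of_hasDerivAt hF hs

end RiemannSum

noncomputable def normalPDF (x : ℝ) : ℝ :=
  (√(2 * π))⁻¹ * exp (-x ^ 2 / 2)

lemma normalPDF_nonneg (x : ℝ) : 0 ≤ normalPDF x := by
  unfold normalPDF; positivity

lemma integrable_exp_neg_sq_div_two : Integrable fun v : ℝ => exp (-v ^ 2 / 2) := by
  convert integrable_exp_neg_mul_sq (b := 1 / 2) (by norm_num) using 3
  ring

lemma hasDerivAt_normalCDF (x : ℝ) : HasDerivAt normalCDF (normalPDF x) x := by
  have hsplit : normalCDF = fun y => (√(2 * π))⁻¹ *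
      ((∫ v in Iic 0, exp (-v ^ 2 / 2)) + ∫ v in (0 : ℝ)..y, exp (-v ^ 2 / 2)) := by
    ext y
    rw [normalCDF, ← intervalIntegral.integral_Iic_sub_Iic
      integrable_exp_neg_sq_div_two.integrableOn integrable_exp_neg_sq_div_two.integrableOn]
    ring
  rw [hsplit]
  exact (((Continuous.integral_hasStrictDerivAt (by fun_prop) 0 x).hasDerivAt.const_add _)
    |>.const_mul _)

lemma monotone_normalCDF : Monotone normalCDF :=
  monotone_of_deriv_nonneg (fun x => (hasDerivAt_normalCDF x).differentiableAt)
    fun x => (hasDerivAt_normalCDF x).deriv ▸ normalPDF_nonneg x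

lemma normalCDF_nonneg (x : ℝ) : 0 ≤ normalCDF x :=
  mul_nonneg (by positivity) (setIntegral_nonneg measurableSet_Iic fun v _ => (exp_pos _).le)

/-- Mills' inequality, from `exp (-v ^ 2 / 2) ≤ exp (x ^ 2 / 2) * exp (-x * v)`. -/
lemma neg_mul_normalCDF_le_normalPDF {x : ℝ} (hx : x < 0) : -x * normalCDF x ≤ normalPDF x := by
  have htail : ∫ v in Iic x, exp (-v ^ 2 / 2) ≤ exp (x ^ 2 / 2) * (exp (-x * x) / -x) := by
    rw [← integral_exp_mul_Iic (neg_pos.2 hx), ← integral_const_mul]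
    refine setIntegral_mono integrable_exp_neg_sq_div_two.integrableOn
      ((integrableOn_exp_mul_Iic (neg_pos.2 hx) x).const_mul _) fun v => ?_
    rw [← exp_add]
    exact exp_le_exp.2 (by nlinarith [sq_nonneg (v - x)])
  have hmills : -x * ∫ v in Iic x, exp (-v ^ 2 / 2) ≤ exp (-x ^ 2 / 2) := by
    calc -x * ∫ v in Iic x, exp (-v ^ 2 / 2) ≤ -x * (exp (x ^ 2 / 2) * (exp (-x * x) / -x)) :=
          mul_le_mul_of_nonneg_left htail (neg_nonneg.2 hx.le)
      _ = exp (x ^ 2 / 2) * exp (-x * x) := by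
          rw [mul_left_comm, mul_div_cancel₀ _ (neg_ne_zero.2 hx.ne)]
      _ = exp (-x ^ 2 / 2) := by rw [← exp_add]; ring_nf
  rw [normalCDF, normalPDF, mul_left_comm]
  exact mul_le_mul_of_nonneg_left hmills (by positivity)

lemma hasDerivAt_normalPDF (x : ℝ) : HasDerivAt normalPDF (-x * normalPDF x) x := by
  have hexponent : HasDerivAt (fun y : ℝ => -y ^ 2 / 2) (-x) x :=
    ((hasDerivAt_pow 2 x).neg.div_const 2).congr_deriv (by ring)
  exact (hexponent.exp.const_mul _).congr_deriv (by rw [normalPDF]; ring)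

lemma tendsto_normalPDF_atBot : Tendsto normalPDF atBot (𝓝 0) := by
  have hsq : Tendsto (fun x : ℝ => -x ^ 2 / 2) atBot atBot := by
    have := (tendsto_id.atBot_mul_atBot₀ tendsto_id).atTop_div_const (two_pos (α := ℝ))
    simpa only [neg_div, id, ← sq, Function.comp_def] using tendsto_neg_atTop_atBot.comp this
  rw [← mul_zero (√(2 * π))⁻¹]
  exact (tendsto_exp_atBot.comp hsq).const_mul _

noncomputable def normalCDFPrimitive (x : ℝ) : ℝ :=
  x * normalCDF x + normalPDF x

lemma hasDerivAt_normalCDFPrimitive (x : ℝ) :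
    HasDerivAt normalCDFPrimitive (normalCDF x) x :=
  (((hasDerivAt_id' x).mul (hasDerivAt_normalCDF x)).add (hasDerivAt_normalPDF x)).congr_deriv
    (by ring)

lemma tendsto_normalCDFPrimitive_atBot : Tendsto normalCDFPrimitive atBot (𝓝 0) := by
  refine tendsto_of_tendsto_of_tendsto_of_le_of_le' tendsto_const_nhds tendsto_normalPDF_atBot
    ?_ ?_
  all_goals
    filter_upwards [eventually_lt_atBot 0] with x hx
    have hmills := neg_mul_normalCDF_le_normalPDF hx
    have hnonneg := normalCDF_nonneg x
    unfold normalCDFPrimitive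
    nlinarith

lemma tendsto_normalCDF_average :
    Tendsto (fun s : ℕ => (1 / √s) * ∑ i ∈ Finset.range s, normalCDF ((i - s) / √s))
      atTop (𝓝 (√(2 * π))⁻¹) := by
  simpa [normalCDFPrimitive, normalPDF] using
    monotone_normalCDF.tendsto_riemannSum_of_hasDerivAt hasDerivAt_normalCDFPrimitive
      tendsto_normalCDFPrimitive_atBot

theorem berry_esseen_errors_average_to_zero :
    Tendsto (fun s : ℕ =>
        (1 / Real.sqrt s) *
          ∑ i ∈ Finset.range s, (poissonCDF s i - normalCDF (((i : ℝ) - s) / Real.sqrt s)))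
      atTop (nhds 0) := by
  have h := tendsto_poissonCDF_average.sub tendsto_normalCDF_average
  rw [sub_self] at h
  refine h.congr fun s => ?_
  rw [Finset.sum_sub_distrib, mul_sub]
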